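/- (Symmetric two-point inequality of Guessab and Schmeisser, first-derivative bound) Let 0 ≤ x ≤ 1 and let f : [-1,1] → ℝ be differentiable with |f'(t)| ≤ M for all t ∈ [-1,1]. Then |∫_{-1}^1 f(t) dt - [f(-x) + f(x)]| ≤ (1 - 2x + 2x²) M. -/

import Mathlib

/-! Split `[-1, 1]` at `0` and apply Ostrowski's inequality on each half, at the node `-x` and
`x` respectively: by the mean value theorem `|f t - f a| ≤ M |t - a|`, and integrating gives
`|∫ c..d f - (d - c) f a| ≤ M ((a - c)² + (d - a)²) / 2`. Both halves contribute
`M (x² + (1 - x)²) / 2`, and `x² + (1 - x)² = 1 - 2x + 2x²`. -/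

open MeasureTheory intervalIntegral Set

open scoped Interval

theorem integral_abs_sub_of_mem_Icc {a c d : ℝ} (ha : a ∈ Icc c d) :
    ∫ t in c..d, |t - a| = ((a - c) ^ 2 + (d - a) ^ 2) / 2 := by
  have half (b : ℝ) : ∫ t in Ι a b, |t - a| = (b - a) ^ 2 / 2 := by
    simpa [sq_abs, one_add_one_eq_two] using integral_pow_abs_sub_uIoc (a := a) (b := b) (n := 1)
  have hcont : Continuous fun t : ℝ => |t - a| := by fun_prop
  rw [← integral_add_adjacent_intervals (hcont.intervalIntegrable c a)
      (hcont.intervalIntegrable a d), integral_of_le ha.1, integral_of_le ha.2,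
    ← uIoc_of_le ha.1, ← uIoc_of_le ha.2, uIoc_comm, half, half]
  ring

theorem abs_integral_sub_mul_le_of_abs_deriv_le {f f' : ℝ → ℝ} {c d a M : ℝ}
    (hf : ∀ t ∈ Icc c d, HasDerivWithinAt f (f' t) (Icc c d) t)
    (hbound : ∀ t ∈ Icc c d, |f' t| ≤ M) (ha : a ∈ Icc c d) :
    |(∫ t in c..d, f t) - (d - c) * f a| ≤ M * (((a - c) ^ 2 + (d - a) ^ 2) / 2) := by
  have hcd : c ≤ d := ha.1.trans ha.2
  have hlip : ∀ t ∈ Icc c d, |f t - f a| ≤ M * |t - a| := fun t ht =>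
    (convex_Icc c d).norm_image_sub_le_of_norm_hasDerivWithin_le hf hbound ha ht
  have hcont : ContinuousOn f (Icc c d) := fun t ht => (hf t ht).continuousWithinAt
  have hint : IntervalIntegrable f volume c d :=
    (hcont.mono (uIcc_of_le hcd).subset).intervalIntegrable
  calc |(∫ t in c..d, f t) - (d - c) * f a| = |∫ t in c..d, (f t - f a)| := by
        rw [integral_sub hint intervalIntegrable_const, intervalIntegral.integral_const,
          smul_eq_mul]
    _ ≤ ∫ t in c..d, |f t - f a| := abs_integral_le_integral_abs hcd
    _ ≤ ∫ t in c..d, M * |t - a| := by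
        have hdist : Continuous fun t => M * |t - a| := by fun_prop
        refine integral_mono_on hcd ?_ (hdist.intervalIntegrable c d) hlip
        exact ((hcont.sub continuousOn_const).abs.mono (uIcc_of_le hcd).subset).intervalIntegrable
    _ = M * (((a - c) ^ 2 + (d - a) ^ 2) / 2) := by
        rw [intervalIntegral.integral_const_mul, integral_abs_sub_of_mem_Icc ha]

theorem guessab_schmeisser_first_derivative (M x : ℝ) (hx : x ∈ Set.Icc (0:ℝ) 1)
    (f f' : ℝ → ℝ)
    (hf : ∀ t ∈ Set.Icc (-1:ℝ) 1, HasDerivWithinAt f (f' t) (Set.Icc (-1) 1) t)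
    (hbound : ∀ t ∈ Set.Icc (-1:ℝ) 1, |f' t| ≤ M) :
    |(∫ t in (-1:ℝ)..1, f t) - (f (-x) + f x)| ≤ (1 - 2 * x + 2 * x ^ 2) * M := by
  obtain ⟨hx0, hx1⟩ := hx
  have hleft : Icc (-1 : ℝ) 0 ⊆ Icc (-1) 1 := Icc_subset_Icc le_rfl zero_le_one
  have hright : Icc (0 : ℝ) 1 ⊆ Icc (-1) 1 := Icc_subset_Icc (by norm_num) le_rfl
  have hcont : ContinuousOn f (Icc (-1) 1) := fun t ht => (hf t ht).continuousWithinAt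
  have bound_left := abs_integral_sub_mul_le_of_abs_deriv_le
    (fun t ht => (hf t (hleft ht)).mono hleft) (fun t ht => hbound t (hleft ht))
    (show -x ∈ Icc (-1 : ℝ) 0 by constructor <;> linarith)
  have bound_right := abs_integral_sub_mul_le_of_abs_deriv_le
    (fun t ht => (hf t (hright ht)).mono hright) (fun t ht => hbound t (hright ht))
    (show x ∈ Icc (0 : ℝ) 1 by constructor <;> linarith)
  rw [← integral_add_adjacent_intervals
    ((hcont.mono hleft).intervalIntegrable_of_Icc (by norm_num))
    ((hcont.mono hright).intervalIntegrable_of_Icc zero_le_one)]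
  calc |(∫ t in (-1:ℝ)..0, f t) + (∫ t in (0:ℝ)..1, f t) - (f (-x) + f x)|
      ≤ |(∫ t in (-1:ℝ)..0, f t) - (0 - -1) * f (-x)|
          + |(∫ t in (0:ℝ)..1, f t) - (1 - 0) * f x| :=
        (abs_add_le _ _).trans_eq' (congrArg abs (by ring))
    _ ≤ M * ((((-x) - -1) ^ 2 + (0 - -x) ^ 2) / 2) + M * (((x - 0) ^ 2 + (1 - x) ^ 2) / 2) :=
        add_le_add bound_left bound_right
    _ = (1 - 2 * x + 2 * x ^ 2) * M := by ring
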